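/- arXiv:chao-dyn/9703010 — 3 statements merged into one kernel-verified Lean document; each statement's English description precedes it below -/
import Mathlib

section
/- The parameter-dependent semiflow possesses η₁-slow relaxations if and only if there exist a point x* ∈ X, a point k* ∈ K, a sequence kₙ → k* in K, and a number ε > 0 such that for every n, every y ∈ ω(x*, k*) and every z ∈ ω(kₙ) satisfy dist(y, z) > ε. -/
open Filter Topology Metric Set MeasureTheory
open scoped ENNReal

/-- A parameter-dependent semiflow on a metric space `X` with parameter space `K`:
a map `f : [0,∞) × X × K → X` (encoded with time in `ℝ`, with conditions only for
nonnegative times), continuous on `[0,∞) × X × K`, satisfying the semigroup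
identities, and injective in `x` for each fixed time and parameter. -/
structure PSemiflow (X K : Type*) [MetricSpace X] [MetricSpace K] where
  f : ℝ → X → K → X
  cont : ContinuousOn (fun p : ℝ × X × K => f p.1 p.2.1 p.2.2) {p : ℝ × X × K | 0 ≤ p.1}
  map_zero : ∀ x k, f 0 x k = x
  semigroup : ∀ t t' : ℝ, 0 ≤ t → 0 ≤ t' → ∀ x k, f t (f t' x k) k = f (t + t') x k
  inj : ∀ t : ℝ, 0 ≤ t → ∀ k, Function.Injective fun x => f t x k

namespace PSemiflow

variable {X K : Type*} [MetricSpace X] [MetricSpace K] (S : PSemiflow X K)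

/-- The ω-limit set `ω(x,k)`: all limits of `f(tₙ,x,k)` along sequences `tₙ → ∞`. -/
def omega (x : X) (k : K) : Set X :=
  {y | ∃ t : ℕ → ℝ, (∀ n, 0 ≤ t n) ∧ Tendsto t atTop atTop ∧
      Tendsto (fun n => S.f (t n) x k) atTop (𝓝 y)}

/-- The complete ω-limit set `ω(k) = ⋃ₓ ω(x,k)`. -/
def omegaK (k : K) : Set X := ⋃ x : X, S.omega x k

/-- The relaxation time `η₁(x,k,ε)`: time of the first entry of the motion into the
`ε`-neighbourhood of `ω(k)`. -/
noncomputable def eta1 (x : X) (k : K) (ε : ℝ) : ℝ :=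
  sInf {t : ℝ | 0 ≤ t ∧ infDist (S.f t x k) (S.omegaK k) < ε}

/-- The system possesses η₁-slow relaxations. -/
def SlowEta1 : Prop := ∃ ε > (0:ℝ), ∀ T > (0:ℝ), ∃ x k, S.eta1 x k ε > T

end PSemiflow

/-!
Forward direction: take motions `(xₙ, kₙ)` with `η₁ > 2(n+1)` and let `pₙ` be the point reached at
time `n + 1`; on the time interval `[0, n + 1]` the motion of `pₙ` stays `ε`-far from `ω(kₙ)`.
A limit `(x*, k*)` of a subsequence of `(pₙ, kₙ)` then has every point of `ω(x*, k*)` far from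
`ω(kₙ)`: such a point is approximated by `f(s, x*, k*)`, hence by `f(s, pₙ, kₙ)`, and total
boundedness of `ω(x*, k*)` makes the bound uniform.

Backward direction: run `x*` under `k*` until it is close to `ω(x*, k*)`, say at time `T₀`; by
uniform continuity in the parameter on `[0, T₀ + T]`, the motion of `f(T₀, x*, kₙ)` under `kₙ` stays
close to `ω(x*, k*)`, hence far from `ω(kₙ)`, for a time longer than `T`.
-/

theorem TotallyBounded.eventually_forall_sub_le_infDist {X ι : Type*} [PseudoMetricSpace X]
    {A : Set X} (hA : TotallyBounded A) {l : Filter ι} {B : ι → Set X} {c δ : ℝ} (hδ : 0 < δ)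
    (h : ∀ y ∈ A, ∀ᶠ i in l, c ≤ infDist y (B i)) :
    ∀ᶠ i in l, ∀ y ∈ A, c - δ ≤ infDist y (B i) := by
  obtain ⟨t, htA, htfin, hcover⟩ := finite_approx_of_totallyBounded hA δ hδ
  filter_upwards [(eventually_all_finite htfin).2 fun z hz => h z (htA hz)] with i hi y hy
  obtain ⟨z, hz, hyz⟩ := mem_iUnion₂.1 (hcover hy)
  have := infDist_le_infDist_add_dist (x := z) (y := y) (s := B i)
  linarith [hi z hz, mem_ball'.1 hyz]

namespace PSemiflow

variable {X K : Type*} [MetricSpace X] [MetricSpace K] (S : PSemiflow X K)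

theorem continuous_f {t : ℝ} (ht : 0 ≤ t) : Continuous fun p : X × K => S.f t p.1 p.2 :=
  S.cont.comp_continuous (continuous_const.prodMk continuous_id) fun _ => ht

theorem eventually_forall_dist_f_lt (x : X) {ι : Type*} {l : Filter ι} {ks : ι → K} {k : K}
    (hks : Tendsto ks l (𝓝 k)) (T : ℝ) {δ : ℝ} (hδ : 0 < δ) :
    ∀ᶠ i in l, ∀ t ∈ Icc 0 T, dist (S.f t x (ks i)) (S.f t x k) < δ := by
  have hcont : ContinuousOn (Function.uncurry fun (k : K) (t : ℝ) => S.f t x k)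
      (univ ×ˢ Icc 0 T) :=
    S.cont.comp (f := fun p : K × ℝ => (p.2, x, p.1)) (by fun_prop) fun _ hp => hp.2.1
  obtain ⟨v, hv, hvδ⟩ :=
    isCompact_Icc.mem_uniformity_of_prod hcont (mem_univ k) (dist_mem_uniformity hδ)
  rw [nhdsWithin_univ] at hv
  exact Eventually.mono (hks hv) fun i hi t ht => hvδ _ hi t ht

theorem exists_mem_omega_tendsto_subseq [CompactSpace X] (x : X) (k : K) {t : ℕ → ℝ}
    (ht0 : ∀ n, 0 ≤ t n) (ht : Tendsto t atTop atTop) :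
    ∃ y ∈ S.omega x k, ∃ φ : ℕ → ℕ, StrictMono φ ∧
      Tendsto (fun n => S.f (t (φ n)) x k) atTop (𝓝 y) := by
  obtain ⟨y, φ, hφ, hy⟩ := CompactSpace.tendsto_subseq fun n => S.f (t n) x k
  exact ⟨y, ⟨t ∘ φ, fun n => ht0 _, ht.comp hφ.tendsto_atTop, hy⟩, φ, hφ, hy⟩

theorem omega_nonempty [CompactSpace X] (x : X) (k : K) : (S.omega x k).Nonempty :=
  let ⟨y, hy, _⟩ := S.exists_mem_omega_tendsto_subseq x k (fun n => Nat.cast_nonneg n)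
    tendsto_natCast_atTop_atTop
  ⟨y, hy⟩

theorem omega_subset_omegaK (x : X) (k : K) : S.omega x k ⊆ S.omegaK k :=
  subset_iUnion (fun x => S.omega x k) x

theorem eventually_infDist_omega_lt [CompactSpace X] (x : X) (k : K) {δ : ℝ} (hδ : 0 < δ) :
    ∀ᶠ t in atTop, infDist (S.f t x k) (S.omega x k) < δ := by
  by_contra h
  simp only [not_eventually, not_lt, frequently_atTop] at h
  choose t ht hδt using fun n : ℕ => h n
  obtain ⟨y, hy, φ, -, hlim⟩ := S.exists_mem_omega_tendsto_subseq x k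
    (fun n => (Nat.cast_nonneg n).trans (ht n)) (tendsto_atTop_mono ht tendsto_natCast_atTop_atTop)
  have hdist := ((continuous_infDist_pt (S.omega x k)).tendsto y).comp hlim
  rw [infDist_zero_of_mem hy] at hdist
  exact hδ.not_ge (ge_of_tendsto' hdist fun n => hδt (φ n))

theorem le_infDist_of_lt_eta1 {x : X} {k : K} {ε t : ℝ} (ht : 0 ≤ t) (hlt : t < S.eta1 x k ε) :
    ε ≤ infDist (S.f t x k) (S.omegaK k) :=
  not_lt.1 fun h => notMem_of_lt_csInf hlt ⟨0, fun _ hs => hs.1⟩ ⟨ht, h⟩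

theorem le_eta1 [CompactSpace X] {x : X} {k : K} {ε T : ℝ} (hε : 0 < ε)
    (h : ∀ t, 0 ≤ t → t < T → ε ≤ infDist (S.f t x k) (S.omegaK k)) : T ≤ S.eta1 x k ε := by
  obtain ⟨t, ht0, ht⟩ := ((eventually_ge_atTop 0).and (S.eventually_infDist_omega_lt x k hε)).exists
  have hsub := infDist_le_infDist_of_subset (x := S.f t x k) (S.omega_subset_omegaK x k)
    (S.omega_nonempty x k)
  refine le_csInf ⟨t, ht0, hsub.trans_lt ht⟩ ?_
  rintro s ⟨hs0, hs⟩
  exact not_lt.1 fun hsT => (h s hs0 hsT).not_gt hs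

theorem exists_omega_jump_of_slowEta1 [CompactSpace X] [CompactSpace K] (h : S.SlowEta1) :
    ∃ (xstar : X) (kstar : K) (ks : ℕ → K) (ε : ℝ), 0 < ε ∧ Tendsto ks atTop (𝓝 kstar) ∧
      ∀ n, ∀ y ∈ S.omega xstar kstar, ∀ z ∈ S.omegaK (ks n), dist y z > ε := by
  obtain ⟨ε, hε, hslow⟩ := h
  choose xs ks hslow using fun n : ℕ => hslow (2 * (n + 1)) (by positivity)
  set ps : ℕ → X := fun n => S.f (n + 1) (xs n) (ks n)
  have hfar (n : ℕ) (s : ℝ) (hs0 : 0 ≤ s) (hs : s ≤ n + 1) :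
      ε ≤ infDist (S.f s (ps n) (ks n)) (S.omegaK (ks n)) := by
    rw [S.semigroup _ _ hs0 (by positivity)]
    exact S.le_infDist_of_lt_eta1 (by positivity) (by linarith [hslow n])
  obtain ⟨⟨xstar, kstar⟩, φ, hφ, hlim⟩ := CompactSpace.tendsto_subseq fun n => (ps n, ks n)
  have hpoint : ∀ y ∈ S.omega xstar kstar,
      ∀ᶠ m in atTop, ε / 2 ≤ infDist y (S.omegaK (ks (φ m))) := by
    rintro y ⟨ts, hts0, -, hts⟩
    obtain ⟨j, hj⟩ := (hts.eventually (ball_mem_nhds y (by positivity : 0 < ε / 4))).exists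
    set s := ts j
    have hnear : Tendsto (fun m => S.f s (ps (φ m)) (ks (φ m))) atTop (𝓝 (S.f s xstar kstar)) :=
      ((S.continuous_f (hts0 j)).tendsto _).comp hlim
    have hφtop : Tendsto (fun m => (φ m : ℝ)) atTop atTop :=
      tendsto_natCast_atTop_atTop.comp hφ.tendsto_atTop
    filter_upwards [hnear.eventually (ball_mem_nhds _ (by positivity : 0 < ε / 4)),
      hφtop.eventually_ge_atTop s] with m hm hsm
    have hdist : dist (S.f s (ps (φ m)) (ks (φ m))) y < ε / 2 := by
      linarith [mem_ball.1 hm, mem_ball.1 hj,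
        dist_triangle (S.f s (ps (φ m)) (ks (φ m))) (S.f s xstar kstar) y]
    linarith [hfar (φ m) s (hts0 j) (by linarith), infDist_le_infDist_add_dist
      (x := S.f s (ps (φ m)) (ks (φ m))) (y := y) (s := S.omegaK (ks (φ m)))]
  obtain ⟨N, hN⟩ := eventually_atTop.1 <| (isCompact_univ.totallyBounded.subset (subset_univ _)
    ).eventually_forall_sub_le_infDist (by positivity : 0 < ε / 4) hpoint
  refine ⟨xstar, kstar, fun n => ks (φ (n + N)), ε / 8, by positivity, ?_, fun n y hy z hz => ?_⟩
  · exact (tendsto_add_atTop_iff_nat N).2 ((continuous_snd.tendsto _).comp hlim)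
  · linarith [hN (n + N) (by omega) y hy, infDist_le_dist_of_mem hz (x := y)]

theorem slowEta1_of_omega_jump [CompactSpace X] {xstar : X} {kstar : K} {ks : ℕ → K} {ε : ℝ}
    (hε : 0 < ε) (hks : Tendsto ks atTop (𝓝 kstar))
    (hjump : ∀ n, ∀ y ∈ S.omega xstar kstar, ∀ z ∈ S.omegaK (ks n), dist y z > ε) :
    S.SlowEta1 := by
  refine ⟨ε / 2, half_pos hε, fun T _ => ?_⟩
  obtain ⟨T₀, hT₀⟩ := eventually_atTop.1 <| (eventually_ge_atTop 0).and
    (S.eventually_infDist_omega_lt xstar kstar (by positivity : 0 < ε / 4))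
  have hT₀0 : 0 ≤ T₀ := (hT₀ T₀ le_rfl).1
  obtain ⟨N, hN⟩ := (S.eventually_forall_dist_f_lt xstar hks (T₀ + T + 1)
    (by positivity : 0 < ε / 4)).exists
  refine ⟨S.f T₀ xstar (ks N), ks N,
    (lt_add_one T).trans_le (S.le_eta1 (half_pos hε) fun s hs0 hsT => ?_)⟩
  rw [S.semigroup _ _ hs0 hT₀0]
  obtain ⟨y, hy, hyd⟩ :=
    (infDist_lt_iff (S.omega_nonempty xstar kstar)).1 (hT₀ (s + T₀) (by linarith)).2
  have hyfar : ε ≤ infDist y (S.omegaK (ks N)) :=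
    (le_infDist ((S.omega_nonempty xstar (ks N)).mono (S.omega_subset_omegaK _ _))).2
      fun z hz => (hjump N y hy z hz).le
  have hdist : dist y (S.f (s + T₀) xstar (ks N)) < ε / 2 := by
    linarith [dist_comm y (S.f (s + T₀) xstar kstar), hN (s + T₀) ⟨by linarith, by linarith⟩,
      dist_triangle_right y (S.f (s + T₀) xstar (ks N)) (S.f (s + T₀) xstar kstar)]
  linarith [infDist_le_infDist_add_dist (x := y) (y := S.f (s + T₀) xstar (ks N))
    (s := S.omegaK (ks N))]

end PSemiflow

/-- Theorem 2.2: the system possesses η₁-slow relaxations iff there are `x* ∈ X`,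
`k* ∈ K`, a sequence `kₙ → k*` and `ε > 0` such that for every `n`, every
`y ∈ ω(x*,k*)` and every `z ∈ ω(kₙ)` satisfy `dist y z > ε`. -/
theorem slowEta1_iff_omegaK_jump {X K : Type*} [MetricSpace X] [CompactSpace X]
    [MetricSpace K] [CompactSpace K] (S : PSemiflow X K) :
    S.SlowEta1 ↔
      ∃ (xstar : X) (kstar : K) (ks : ℕ → K) (ε : ℝ), 0 < ε ∧
        Tendsto ks atTop (𝓝 kstar) ∧
        ∀ n, ∀ y ∈ S.omega xstar kstar, ∀ z ∈ S.omegaK (ks n), dist y z > ε :=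
  ⟨S.exists_omega_jump_of_slowEta1,
    fun ⟨_, _, _, _, hε, hks, hjump⟩ => S.slowEta1_of_omega_jump hε hks hjump⟩
end

section
/- Let f be a semiflow on a compact connected metric space X such that the closure of ω_f is a disconnected set. Then f possesses η₃-slow relaxations and τ₁-, τ₂-, τ₃-slow relaxations. -/
open Filter Topology Metric Set MeasureTheory
open scoped ENNReal

/-- A semiflow on a metric space `X`: a map `f : [0,∞) × X → X` (encoded with time
in `ℝ`, with conditions only for nonnegative times), continuous on `[0,∞) × X`,
satisfying the semigroup identities, and injective for each fixed time. -/
structure Semiflow (X : Type*) [MetricSpace X] where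
  f : ℝ → X → X
  cont : ContinuousOn (fun p : ℝ × X => f p.1 p.2) {p : ℝ × X | 0 ≤ p.1}
  map_zero : ∀ x, f 0 x = x
  semigroup : ∀ t t' : ℝ, 0 ≤ t → 0 ≤ t' → ∀ x, f t (f t' x) = f (t + t') x
  inj : ∀ t : ℝ, 0 ≤ t → Function.Injective fun x => f t x

namespace Semiflow

variable {X : Type*} [MetricSpace X] (S : Semiflow X)

/-- The ω-limit set `ω(x)`: all limits of `f(tₙ,x)` along sequences `tₙ → ∞`. -/
def omega (x : X) : Set X :=
  {y | ∃ t : ℕ → ℝ, (∀ n, 0 ≤ t n) ∧ Tendsto t atTop atTop ∧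
      Tendsto (fun n => S.f (t n) x) atTop (𝓝 y)}

/-- The complete ω-limit set `ω_f = ⋃ₓ ω(x)`. -/
def omegaF : Set X := ⋃ x : X, S.omega x

/-- `τ₁(x,ε)`: time of the first entry into the `ε`-neighbourhood of `ω(x)`. -/
noncomputable def tau1 (x : X) (ε : ℝ) : ℝ :=
  sInf {t : ℝ | 0 ≤ t ∧ infDist (S.f t x) (S.omega x) < ε}

/-- The semiflow possesses τ₁-slow relaxations. -/
def SlowTau1 : Prop := ∃ ε > (0:ℝ), ∀ T > (0:ℝ), ∃ x, S.tau1 x ε > T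

/-- `τ₂(x,ε)`: Lebesgue measure of the set of times spent outside the
`ε`-neighbourhood of `ω(x)`. -/
noncomputable def tau2 (x : X) (ε : ℝ) : ℝ≥0∞ :=
  volume {t : ℝ | 0 ≤ t ∧ ε ≤ infDist (S.f t x) (S.omega x)}

/-- The semiflow possesses τ₂-slow relaxations. -/
def SlowTau2 : Prop := ∃ ε > (0:ℝ), ∀ T > (0:ℝ), ∃ x, ENNReal.ofReal T < S.tau2 x ε

/-- `τ₃(x,ε)`: time of the final entry into the `ε`-neighbourhood of `ω(x)`. -/
noncomputable def tau3 (x : X) (ε : ℝ) : ℝ :=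
  sInf {t : ℝ | 0 ≤ t ∧ ∀ t' > t, infDist (S.f t' x) (S.omega x) < ε}

/-- The semiflow possesses τ₃-slow relaxations. -/
def SlowTau3 : Prop := ∃ ε > (0:ℝ), ∀ T > (0:ℝ), ∃ x, S.tau3 x ε > T

/-- `η₃(x,ε)`: time of the final entry into the `ε`-neighbourhood of `ω_f`. -/
noncomputable def eta3 (x : X) (ε : ℝ) : ℝ :=
  sInf {t : ℝ | 0 ≤ t ∧ ∀ t' > t, infDist (S.f t' x) S.omegaF < ε}

/-- The semiflow possesses η₃-slow relaxations. -/
def SlowEta3 : Prop := ∃ ε > (0:ℝ), ∀ T > (0:ℝ), ∃ x, S.eta3 x ε > T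

end Semiflow

/-!
Split `closure ω_f` by closed sets `A`, `B` with disjoint `δ`-thickenings. Every trajectory
eventually stays in the `δ`-neighbourhood of `A ∪ B`, and its tail is connected, so each `ω(x)`
lies in `A` or in `B`: `X` is the union of the two basins. Since `X` is connected, some `x₀` lies
in the closure of both, say with `ω(x₀) ⊆ A`. Points of the basin of `B` close to `x₀` follow the
orbit of `x₀` near `A` for an arbitrarily long time while their own ω-limit set lies in `B`,
which makes `τ₁`, `τ₂`, `τ₃` unbounded. If `η₃(·, δ)` were bounded by `T`, the connected set
`f(T + 1, X)` would lie near `A ∪ B`, hence near one of `A`, `B`; but its closure contains `ω_f`,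
which meets both.
-/

lemma closure_inter_closure_nonempty {X : Type*} [TopologicalSpace X] [PreconnectedSpace X]
    {s t : Set X} (hst : s ∪ t = univ) (hs : s.Nonempty) (ht : t.Nonempty) :
    (closure s ∩ closure t).Nonempty := by
  simpa using isPreconnected_closed_iff.1 isPreconnected_univ _ _ isClosed_closure
    isClosed_closure (hst ▸ union_subset_union subset_closure subset_closure)
    (by simpa using hs.mono subset_closure) (by simpa using ht.mono subset_closure)

section Separation

variable {X : Type*} [PseudoMetricSpace X]

lemma exists_thickenings_of_not_isPreconnected_closure [CompactSpace X] {s : Set X}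
    (h : ¬ IsPreconnected (closure s)) :
    ∃ A B : Set X, ∃ δ > 0, Disjoint (thickening δ A) (thickening δ B) ∧ s ⊆ A ∪ B ∧
      (s ∩ A).Nonempty ∧ (s ∩ B).Nonempty := by
  rw [isPreconnected_iff_subset_of_fully_disjoint_closed isClosed_closure] at h
  push Not at h
  obtain ⟨u, v, hu, hv, hsuv, huv, hnu, hnv⟩ := h
  obtain ⟨δ, hδ, hdisj⟩ := huv.exists_thickenings hu.isCompact hv
  have hs : s ⊆ u ∪ v := subset_closure.trans hsuv
  refine ⟨u, v, δ, hδ, hdisj, hs, ?_, ?_⟩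
  · by_contra hsu
    exact hnv (closure_minimal (fun x hx => (hs hx).resolve_left fun hxu => hsu ⟨x, hx, hxu⟩) hv)
  · by_contra hsv
    exact hnu (closure_minimal (fun x hx => (hs hx).resolve_right fun hxv => hsv ⟨x, hx, hxv⟩) hu)

lemma IsPreconnected.disjoint_closure_or {A B C : Set X} {δ : ℝ} (hδ : 0 < δ)
    (hC : IsPreconnected C) (hAB : Disjoint (thickening δ A) (thickening δ B))
    (hCAB : C ⊆ thickening δ (A ∪ B)) : Disjoint (closure C) B ∨ Disjoint (closure C) A := by
  rw [thickening_union] at hCAB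
  rcases hC.subset_or_subset isOpen_thickening isOpen_thickening hAB hCAB with hCA | hCB
  · exact .inl (((hAB.mono_left hCA).closure_left isOpen_thickening).mono_right
      (self_subset_thickening hδ B))
  · exact .inr (((hAB.symm.mono_left hCB).closure_left isOpen_thickening).mono_right
      (self_subset_thickening hδ A))

end Separation

lemma le_csInf_setOf_nonneg_and {P : ℝ → Prop} {T : ℝ} (hP : ∃ t, 0 ≤ t ∧ P t)
    (hT : ∀ t ∈ Icc 0 T, ¬ P t) : T ≤ sInf {t | 0 ≤ t ∧ P t} :=
  le_csInf hP fun t ⟨ht₀, ht⟩ => le_of_not_gt fun htT => hT t ⟨ht₀, htT.le⟩ ht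

lemma le_csInf_setOf_nonneg_and_forall_gt {P : ℝ → Prop} {T : ℝ} (hP : ∀ᶠ t in atTop, P t)
    (hT : ¬ P T) : T ≤ sInf {t | 0 ≤ t ∧ ∀ t' > t, P t'} := by
  obtain ⟨a, ha⟩ := hP.exists_forall_of_atTop
  exact le_csInf ⟨max a 0, le_max_right _ _, fun t' ht' => ha t' ((le_max_left _ _).trans ht'.le)⟩
    fun t ⟨_, ht⟩ => le_of_not_gt fun htT => hT (ht T htT)

namespace Semiflow

variable {X : Type*} [MetricSpace X] (S : Semiflow X)

lemma continuous_f {t : ℝ} (ht : 0 ≤ t) : Continuous (S.f t) :=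
  S.cont.comp_continuous (continuous_const.prodMk continuous_id) fun _ => ht

lemma continuousOn_orbit (x : X) : ContinuousOn (fun t => S.f t x) (Ici 0) :=
  S.cont.comp (continuous_id.prodMk continuous_const).continuousOn fun _ ht => ht

lemma eventually_nhds_forall_mem {K : Set ℝ} (hK : IsCompact K) (hK₀ : ∀ t ∈ K, 0 < t)
    {U : Set X} (hU : IsOpen U) {x : X} (hx : ∀ t ∈ K, S.f t x ∈ U) :
    ∀ᶠ z in 𝓝 x, ∀ t ∈ K, S.f t z ∈ U := by
  refine hK.eventually_forall_of_forall_eventually fun t ht => ?_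
  have hcont : ContinuousAt (fun p : X × ℝ => S.f p.2 p.1) (x, t) :=
    (S.cont.continuousAt (continuous_fst.continuousAt.preimage_mem_nhds
      (Ici_mem_nhds (hK₀ t ht)))).comp continuous_swap.continuousAt
  exact hcont.eventually_mem (hU.mem_nhds (hx t ht))

lemma mem_omega_of_tendsto {x y : X} {t : ℕ → ℝ} (ht : Tendsto t atTop atTop)
    (hy : Tendsto (fun n => S.f (t n) x) atTop (𝓝 y)) : y ∈ S.omega x := by
  obtain ⟨N, hN⟩ := (ht.eventually_ge_atTop 0).exists_forall_of_atTop
  exact ⟨fun n => t (n + N), fun n => hN _ (Nat.le_add_left N n),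
    ht.comp (tendsto_add_atTop_nat N), hy.comp (tendsto_add_atTop_nat N)⟩

lemma mem_omega_iff_mapClusterPt {x y : X} :
    y ∈ S.omega x ↔ MapClusterPt y atTop (fun t => S.f t x) := by
  refine ⟨fun ⟨t, _, ht, hy⟩ => .of_comp ht hy.mapClusterPt, fun hy => ?_⟩
  obtain ⟨t, hy, ht⟩ := hy.exists_seq_tendsto
  exact S.mem_omega_of_tendsto ht hy

lemma omega_eq_omegaLimit (x : X) : S.omega x = omegaLimit atTop S.f {x} := by
  ext y
  rw [mem_omega_iff_mapClusterPt, mem_omegaLimit_singleton_iff_mapClusterPt]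

lemma omega_f {s : ℝ} (hs : 0 ≤ s) (x : X) : S.omega (S.f s x) = S.omega x := by
  ext y
  simp only [mem_omega_iff_mapClusterPt]
  have hshift : (fun t => S.f t (S.f s x)) =ᶠ[atTop] fun t => S.f (t + s) x :=
    (eventually_ge_atTop 0).mono fun t ht => S.semigroup t s ht hs x
  rw [hshift.mapClusterPt_iff]
  exact (mapClusterPt_comp (φ := (· + s)) (u := fun t => S.f t x)).trans
    (by rw [map_add_atTop_eq])

lemma omega_subset_closure_image_Ici (x : X) (t₀ : ℝ) :
    S.omega x ⊆ closure ((fun t => S.f t x) '' Ici t₀) := by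
  rw [omega_eq_omegaLimit, ← image2_singleton_right]
  exact omegaLimit_subset_closure_image2 _ _ _ (Ici_mem_atTop t₀)

lemma omegaF_subset_closure_range {t : ℝ} (ht : 0 ≤ t) : S.omegaF ⊆ closure (range (S.f t)) := by
  refine iUnion_subset fun x => (S.omega_subset_closure_image_Ici x t).trans (closure_mono ?_)
  rintro _ ⟨s, hs, rfl⟩
  exact ⟨S.f (s - t) x, by rw [S.semigroup t (s - t) ht (sub_nonneg.2 hs), add_sub_cancel]⟩

def HasLongExcursions (δ : ℝ) : Prop :=
  ∀ T, ∃ y, ∀ t ∈ Icc 0 T, δ ≤ infDist (S.f t y) (S.omega y)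

variable {S} in
lemma HasLongExcursions.slowTau2 {δ : ℝ} (hδ : 0 < δ) (hS : S.HasLongExcursions δ) :
    S.SlowTau2 := by
  refine ⟨δ, hδ, fun T hT => ?_⟩
  obtain ⟨y, hy⟩ := hS (T + 1)
  refine ⟨y, ?_⟩
  calc ENNReal.ofReal T < ENNReal.ofReal (T + 1) :=
        (ENNReal.ofReal_lt_ofReal_iff (by linarith)).2 (lt_add_one T)
    _ = volume (Icc (0 : ℝ) (T + 1)) := by rw [Real.volume_Icc, sub_zero]
    _ ≤ S.tau2 y δ := measure_mono fun t ht => ⟨ht.1, hy t ht⟩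

variable [CompactSpace X]

lemma omega_nonempty (x : X) : (S.omega x).Nonempty := by
  rw [omega_eq_omegaLimit]
  exact nonempty_omegaLimit _ _ _ (singleton_nonempty x)

lemma eventually_mem_of_omega_subset {x : X} {U : Set X} (hU : IsOpen U) (h : S.omega x ⊆ U) :
    ∀ᶠ t in atTop, S.f t x ∈ U := by
  rw [omega_eq_omegaLimit] at h
  exact (eventually_mapsTo_of_isOpen_of_omegaLimit_subset _ _ _ hU h).mono fun t ht => ht rfl

lemma eventually_infDist_lt_of_omega_subset {x : X} {E : Set X} {ε : ℝ} (hε : 0 < ε)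
    (h : S.omega x ⊆ E) : ∀ᶠ t in atTop, infDist (S.f t x) E < ε :=
  (S.eventually_mem_of_omega_subset isOpen_thickening (h.trans (self_subset_thickening hε E))).mono
    fun _ ht => (mem_thickening_iff_infDist_lt ((S.omega_nonempty x).mono h)).1 ht

lemma omega_subset_or_subset {A B : Set X} {δ : ℝ} (hδ : 0 < δ)
    (hAB : Disjoint (thickening δ A) (thickening δ B)) {x : X} (hx : S.omega x ⊆ A ∪ B) :
    S.omega x ⊆ A ∨ S.omega x ⊆ B := by
  obtain ⟨t₀, ht₀⟩ := ((S.eventually_mem_of_omega_subset isOpen_thickening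
    (hx.trans (self_subset_thickening hδ _))).and (eventually_ge_atTop 0)).exists_forall_of_atTop
  have htail : IsPreconnected ((fun t => S.f t x) '' Ici t₀) :=
    isPreconnected_Ici.image _ ((S.continuousOn_orbit x).mono fun t ht => (ht₀ t ht).2)
  have hω := S.omega_subset_closure_image_Ici x t₀
  rcases htail.disjoint_closure_or hδ hAB (image_subset_iff.2 fun t ht => (ht₀ t ht).1) with h | h
  · exact .inl fun y hy => (hx hy).resolve_right (disjoint_left.1 h (hω hy))
  · exact .inr fun y hy => (hx hy).resolve_left (disjoint_left.1 h (hω hy))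

lemma exists_omega_subset {A B : Set X} {δ : ℝ} (hδ : 0 < δ)
    (hAB : Disjoint (thickening δ A) (thickening δ B)) (hω : S.omegaF ⊆ A ∪ B)
    (hA : (S.omegaF ∩ A).Nonempty) : ∃ z, S.omega z ⊆ A := by
  obtain ⟨a, ha, haA⟩ := hA
  obtain ⟨z, hz⟩ := mem_iUnion.1 ha
  refine ⟨z, (S.omega_subset_or_subset hδ hAB ((subset_iUnion _ z).trans hω)).resolve_right
    fun hB => ?_⟩
  exact hAB.ne_of_mem (self_subset_thickening hδ A haA) (self_subset_thickening hδ B (hB hz)) rfl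

lemma hasLongExcursions_of_mem_closure {A B : Set X} {δ : ℝ} (hδ : 0 < δ)
    (hAB : Disjoint (thickening δ A) (thickening δ B)) {x₀ : X} (hx₀ : S.omega x₀ ⊆ A)
    (hx₀B : x₀ ∈ closure {z | S.omega z ⊆ B}) : S.HasLongExcursions δ := by
  intro T
  obtain ⟨t₀, hnearA⟩ := ((S.eventually_mem_of_omega_subset isOpen_thickening
    (hx₀.trans (self_subset_thickening hδ A))).and (eventually_ge_atTop 1)).exists_forall_of_atTop
  have hnear : ∀ᶠ z in 𝓝 x₀, ∀ t ∈ Icc t₀ (t₀ + T), S.f t z ∈ thickening δ A :=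
    S.eventually_nhds_forall_mem isCompact_Icc (fun t ht => one_pos.trans_le (hnearA t ht.1).2)
      isOpen_thickening fun t ht => (hnearA t ht.1).1
  obtain ⟨z, hz, hzB⟩ := (hnear.and_frequently (mem_closure_iff_frequently.1 hx₀B)).exists
  have ht₀ : 0 ≤ t₀ := zero_le_one.trans (hnearA t₀ le_rfl).2
  refine ⟨S.f t₀ z, fun t ht => ?_⟩
  have hfar : S.f (t + t₀) z ∈ thickening δ A := hz _ ⟨by linarith [ht.1], by linarith [ht.2]⟩
  rw [S.semigroup t t₀ ht.1 ht₀, ← not_lt, ← mem_thickening_iff_infDist_lt (S.omega_nonempty _),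
    S.omega_f ht₀]
  exact fun hB => hAB.ne_of_mem hfar (thickening_subset_of_subset δ hzB hB) rfl

variable {S} in
lemma HasLongExcursions.slowTau1 {δ : ℝ} (hδ : 0 < δ) (hS : S.HasLongExcursions δ) :
    S.SlowTau1 := by
  refine ⟨δ, hδ, fun T _ => ?_⟩
  obtain ⟨y, hy⟩ := hS (T + 1)
  obtain ⟨t, hδt, ht⟩ :=
    ((S.eventually_infDist_lt_of_omega_subset hδ subset_rfl).and (eventually_ge_atTop 0)).exists
  exact ⟨y, (lt_add_one T).trans_le
    (le_csInf_setOf_nonneg_and ⟨t, ht, hδt⟩ fun t ht => not_lt.2 (hy t ht))⟩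

variable {S} in
lemma HasLongExcursions.slowTau3 {δ : ℝ} (hδ : 0 < δ) (hS : S.HasLongExcursions δ) :
    S.SlowTau3 := by
  refine ⟨δ, hδ, fun T _ => ?_⟩
  obtain ⟨y, hy⟩ := hS (T + 1)
  exact ⟨y, (lt_add_one T).trans_le (le_csInf_setOf_nonneg_and_forall_gt
    (S.eventually_infDist_lt_of_omega_subset hδ subset_rfl)
    (not_lt.2 (hy (T + 1) ⟨by linarith, le_rfl⟩)))⟩

lemma slowEta3 [PreconnectedSpace X] {A B : Set X} {δ : ℝ} (hδ : 0 < δ)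
    (hAB : Disjoint (thickening δ A) (thickening δ B)) (hω : S.omegaF ⊆ A ∪ B)
    (hA : (S.omegaF ∩ A).Nonempty) (hB : (S.omegaF ∩ B).Nonempty) : S.SlowEta3 := by
  refine ⟨δ, hδ, fun T _ => ?_⟩
  by_contra! hη
  have hnear : range (S.f (T + 1)) ⊆ thickening δ (A ∪ B) := by
    rintro _ ⟨x, rfl⟩
    refine thickening_subset_of_subset δ hω
      ((mem_thickening_iff_infDist_lt (hA.mono inter_subset_left)).2 ?_)
    by_contra hx
    have := le_csInf_setOf_nonneg_and_forall_gt
      (S.eventually_infDist_lt_of_omega_subset hδ (subset_iUnion _ x)) hx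
    exact absurd (this.trans (hη x)) (by linarith)
  have hcl := S.omegaF_subset_closure_range (t := T + 1) (by linarith)
  rcases (isPreconnected_range (S.continuous_f (t := T + 1) (by linarith))).disjoint_closure_or
    hδ hAB hnear with h | h
  · obtain ⟨b, hb, hbB⟩ := hB
    exact disjoint_left.1 h (hcl hb) hbB
  · obtain ⟨a, ha, haA⟩ := hA
    exact disjoint_left.1 h (hcl ha) haA

end Semiflow

/-- Theorem 3.3: if `X` is connected and the closure of `ω_f` is disconnected,
then the semiflow possesses η₃- and τ₁-, τ₂-, τ₃-slow relaxations. -/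
theorem disconnected_closure_omegaF_slow {X : Type*} [MetricSpace X] [CompactSpace X]
    [ConnectedSpace X] (S : Semiflow X)
    (h : ¬ IsPreconnected (closure S.omegaF)) :
    S.SlowEta3 ∧ S.SlowTau1 ∧ S.SlowTau2 ∧ S.SlowTau3 := by
  obtain ⟨A, B, δ, hδ, hAB, hω, hωA, hωB⟩ := exists_thickenings_of_not_isPreconnected_closure h
  have hdich : ∀ x, S.omega x ⊆ A ∨ S.omega x ⊆ B :=
    fun x => S.omega_subset_or_subset hδ hAB ((subset_iUnion _ x).trans hω)
  obtain ⟨x₀, hx₀A, hx₀B⟩ : (closure {z | S.omega z ⊆ A} ∩ closure {z | S.omega z ⊆ B}).Nonempty :=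
    closure_inter_closure_nonempty (eq_univ_of_forall hdich)
      (S.exists_omega_subset hδ hAB hω hωA)
      (S.exists_omega_subset hδ hAB.symm (hω.trans (union_comm A B).subset) hωB)
  have hS : S.HasLongExcursions δ := by
    rcases hdich x₀ with hx | hx
    · exact S.hasLongExcursions_of_mem_closure hδ hAB hx hx₀B
    · exact S.hasLongExcursions_of_mem_closure hδ hAB.symm hx hx₀A
  exact ⟨S.slowEta3 hδ hAB hω hωA hωB, hS.slowTau1 hδ, hS.slowTau2 hδ, hS.slowTau3 hδ⟩
end

section
/- Let x ∈ X, k ∈ K and suppose x ∈ ω⁰(x,k). Then for every ε > 0 there exists a periodic (k,x,ε)-motion: a (k,x,ε)-motion φ and a number t₀ > 0 such that φ(t + t₀) = φ(t) for all t ≥ 0. -/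
open Filter Topology Metric Set MeasureTheory
open scoped ENNReal

namespace PSemiflow

variable {X K : Type*} [MetricSpace X] [MetricSpace K] (S : PSemiflow X K)

/-- A `(k,x,ε)`-motion (with time scale `T`): a perturbed motion which on every
interval of length `T` departs from the true motion by less than `ε`. -/
def IsEpsMotion (T ε : ℝ) (k : K) (x : X) (φ : ℝ → X) : Prop :=
  φ 0 = x ∧ ∀ t : ℝ, 0 ≤ t → ∀ τ ∈ Icc (0:ℝ) T, dist (φ (t + τ)) (S.f τ (φ t) k) < ε

/-- `ω^ε(x,k)`: ω-limit points of all `(k,x,ε)`-motions. -/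
def omegaEps (T ε : ℝ) (x : X) (k : K) : Set X :=
  {y | ∃ φ : ℝ → X, S.IsEpsMotion T ε k x φ ∧
      ∃ t : ℕ → ℝ, (∀ n, 0 ≤ t n) ∧ Tendsto t atTop atTop ∧
        Tendsto (fun n => φ (t n)) atTop (𝓝 y)}

/-- `ω⁰(x,k) = ⋂_{ε>0} ω^ε(x,k)`. -/
def omegaZero (T : ℝ) (x : X) (k : K) : Set X := ⋂ ε > (0:ℝ), S.omegaEps T ε x k

end PSemiflow

/-!
Pick an `ε₁`-motion `φ` from `x` that comes back `δ/2`-close to `x` at a time `t₀ ≥ T`, with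
`ε₁ ≤ δ/2`, and repeat `φ|[0, t₀)` periodically. Across a seam at `t₀`, the true motion
started at `φ t'` is `ε₁`-close to `φ t₀` at time `t₀`, hence `δ`-close to `x`; by continuity
of the flow at `x`, uniform over times in `[0, T]`, it then stays `ε₂`-close to the true motion
of `x`, which the restarted copy of `φ` follows up to `ε₁`.
-/

noncomputable def periodize {α : Type*} (φ : ℝ → α) {p : ℝ} (hp : 0 < p) : ℝ → α :=
  fun t => φ (toIcoMod hp 0 t)

section Periodize

variable {α : Type*} (φ : ℝ → α) {p : ℝ} (hp : 0 < p)

theorem periodic_periodize : Function.Periodic (periodize φ hp) p := fun t => by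
  simp only [periodize, toIcoMod_add_right]

theorem periodize_eq_of_mem_Ico {t : ℝ} (ht : t ∈ Ico 0 p) : periodize φ hp t = φ t := by
  rw [periodize, (toIcoMod_eq_self hp).mpr (by rwa [zero_add])]

theorem periodize_add_eq_periodize_toIcoMod_add (t τ : ℝ) :
    periodize φ hp (t + τ) = periodize φ hp (toIcoMod hp 0 t + τ) := by
  refine congrArg φ ((toIcoMod_eq_toIcoMod hp).mpr ?_)
  exact ⟨-toIcoDiv hp 0 t, by rw [add_sub_add_right_eq_sub, toIcoMod_sub_self, neg_smul]⟩

end Periodize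

namespace PSemiflow

variable {X K : Type*} [MetricSpace X] [MetricSpace K] (S : PSemiflow X K)

theorem eventually_forall_dist_f_lt_s18 {T ε : ℝ} (hε : 0 < ε) (x : X) (k : K) :
    ∀ᶠ y in 𝓝 x, ∀ s ∈ Icc 0 T, dist (S.f s y k) (S.f s x k) < ε := by
  have hcont : ContinuousOn (fun q : X × ℝ => S.f q.2 q.1 k) (univ ×ˢ Icc 0 T) :=
    S.cont.comp (f := fun q : X × ℝ => (q.2, q.1, k)) (by fun_prop) fun _ hq => hq.2.1
  obtain ⟨v, hv, hvε⟩ := isCompact_Icc.mem_uniformity_of_prod (f := fun y s => S.f s y k)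
    hcont (mem_univ x) (dist_mem_uniformity hε)
  rw [nhdsWithin_univ] at hv
  exact mem_of_superset hv hvε

theorem IsEpsMotion.mono {T ε ε' : ℝ} {k : K} {x : X} {φ : ℝ → X}
    (hφ : S.IsEpsMotion T ε k x φ) (hεε' : ε ≤ ε') : S.IsEpsMotion T ε' k x φ :=
  ⟨hφ.1, fun t ht τ hτ => (hφ.2 t ht τ hτ).trans_le hεε'⟩

theorem isEpsMotion_periodize {T ε₁ ε₂ δ t₀ : ℝ} {k : K} {x : X} {φ : ℝ → X}
    (hφ : S.IsEpsMotion T ε₁ k x φ) (ht₀ : 0 < t₀) (hTt₀ : T ≤ t₀)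
    (hreturn : dist (φ t₀) x < δ - ε₁) (hε₂ : 0 ≤ ε₂)
    (hflow : ∀ y, dist y x < δ → ∀ s ∈ Icc 0 T, dist (S.f s y k) (S.f s x k) < ε₂) :
    S.IsEpsMotion T (ε₁ + ε₂) k x (periodize φ ht₀) := by
  refine ⟨(periodize_eq_of_mem_Ico φ ht₀ ⟨le_rfl, ht₀⟩).trans hφ.1, fun t _ τ hτ => ?_⟩
  set t' := toIcoMod ht₀ 0 t
  have ht' : t' ∈ Ico 0 t₀ := by simpa using toIcoMod_mem_Ico ht₀ 0 t
  rw [periodize_add_eq_periodize_toIcoMod_add, show periodize φ ht₀ t = φ t' from rfl]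
  rcases lt_or_ge (t' + τ) t₀ with hlt | hge
  · rw [periodize_eq_of_mem_Ico φ ht₀ ⟨by linarith [ht'.1, hτ.1], hlt⟩]
    exact (hφ.2 t' ht'.1 τ hτ).trans_le (le_add_of_nonneg_right hε₂)
  set u := t' + τ - t₀
  set σ := t₀ - t'
  have hu : u ∈ Icc 0 T := ⟨by linarith, by linarith [ht'.2, hτ.2]⟩
  have hσ : σ ∈ Icc 0 T := ⟨by linarith [ht'.2], by linarith [hτ.2]⟩
  have hψ : periodize φ ht₀ (t' + τ) = φ u := by
    rw [← (periodic_periodize φ ht₀).sub_eq]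
    exact periodize_eq_of_mem_Ico φ ht₀ ⟨hu.1, by linarith [ht'.2, hτ.2]⟩
  have hsplit : S.f τ (φ t') k = S.f u (S.f σ (φ t') k) k := by
    rw [S.semigroup u σ hu.1 hσ.1]
    congr 1
    ring
  have hnear : dist (S.f σ (φ t') k) x < δ := by
    have hseam := hφ.2 t' ht'.1 σ hσ
    rw [add_sub_cancel] at hseam
    calc dist (S.f σ (φ t') k) x ≤ dist (φ t₀) (S.f σ (φ t') k) + dist (φ t₀) x :=
          dist_triangle_left _ _ _
      _ < ε₁ + (δ - ε₁) := add_lt_add hseam hreturn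
      _ = δ := by ring
  have hrestart : dist (φ u) (S.f u x k) < ε₁ := by
    simpa [hφ.1] using hφ.2 0 le_rfl u hu
  rw [hψ, hsplit]
  calc dist (φ u) (S.f u (S.f σ (φ t') k) k)
      ≤ dist (φ u) (S.f u x k) + dist (S.f u (S.f σ (φ t') k) k) (S.f u x k) :=
        dist_triangle_right _ _ _
    _ < ε₁ + ε₂ := add_lt_add hrestart (hflow _ hnear u hu)

end PSemiflow

theorem periodic_eps_motion_of_mem_omegaZero_general {X K : Type*} [MetricSpace X]
    [MetricSpace K] (S : PSemiflow X K)
    (T : ℝ) (x : X) (k : K) (hx : x ∈ S.omegaZero T x k) :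
    ∀ ε > (0:ℝ), ∃ (φ : ℝ → X) (t₀ : ℝ), S.IsEpsMotion T ε k x φ ∧ 0 < t₀ ∧
      ∀ t : ℝ, 0 ≤ t → φ (t + t₀) = φ t := by
  intro ε hε
  obtain ⟨δ, hδ, hflow⟩ := Metric.eventually_nhds_iff.mp
    (S.eventually_forall_dist_f_lt_s18 (T := T) (half_pos hε) x k)
  set ε₁ := min (δ / 2) (ε / 2)
  have hε₁ : 0 < ε₁ := lt_min (half_pos hδ) (half_pos hε)
  obtain ⟨φ, hφ, ts, -, hts, hlim⟩ := mem_iInter₂.mp hx ε₁ hε₁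
  obtain ⟨n, hTn, hn, hreturn⟩ := ((hts.eventually_ge_atTop T).and
    ((hts.eventually_gt_atTop 0).and (hlim.eventually (ball_mem_nhds x (half_pos hδ))))).exists
  refine ⟨periodize φ hn, ts n, ?_, hn, fun t _ => periodic_periodize φ hn t⟩
  refine (S.isEpsMotion_periodize hφ hn hTn ?_ (half_pos hε).le hflow).mono S ?_
  · linarith [mem_ball.mp hreturn, min_le_left (δ / 2) (ε / 2)]
  · linarith [min_le_right (δ / 2) (ε / 2)]

/-- Proposition 4.9 (a version of the C⁰-closing lemma): if `x ∈ ω⁰(x,k)`, then for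
every `ε > 0` there exists a periodic `(k,x,ε)`-motion. -/
theorem periodic_eps_motion_of_mem_omegaZero {X K : Type*} [MetricSpace X]
    [CompactSpace X] [MetricSpace K] [CompactSpace K] (S : PSemiflow X K)
    (T : ℝ) (hT : 0 < T) (x : X) (k : K) (hx : x ∈ S.omegaZero T x k) :
    ∀ ε > (0:ℝ), ∃ (φ : ℝ → X) (t₀ : ℝ), S.IsEpsMotion T ε k x φ ∧ 0 < t₀ ∧
      ∀ t : ℝ, 0 ≤ t → φ (t + t₀) = φ t :=
  periodic_eps_motion_of_mem_omegaZero_general S T x k hx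
end
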